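/- arXiv:1312.2606 — 3 statements merged into one kernel-verified Lean document; each statement's English description precedes it below -/
import Mathlib

section
/- For every s ≥ 1, the empirical Rademacher complexity of F_s satisfies R̂(F_s) = (2√R/(TN)) · E_σ[ ‖u‖_{s*} ], where u ∈ ℝ^T is the random vector with entries u_t = ‖Σ_{i=1}^N σ_t^i φ_t^i‖ (equivalently u_t = √(σ_t′ K_t σ_t), with K_t the Gram matrix whose (i,j) entry is ⟨φ_t^i, φ_t^j⟩ and σ_t = (σ_t^1,…,σ_t^N)′). -/
open scoped BigOperators
open RealInnerProductSpace

noncomputable section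

/-- The sign `+1`/`-1` associated with a Boolean, used to realize Rademacher variables. -/
def sgn (b : Bool) : ℝ := if b then 1 else -1

/-- Expectation over i.i.d. Rademacher variables `σ_t^i` (`t = 1,…,T`, `i = 1,…,N`),
realized as the uniform average over all sign patterns. -/
def Eσ (T N : ℕ) (f : (Fin T → Fin N → Bool) → ℝ) : ℝ :=
  (∑ σ : Fin T → Fin N → Bool, f σ) / (Fintype.card (Fin T → Fin N → Bool) : ℝ)

/-- The hypothesis class `F_s`: tuples `(w_1,…,w_T)` such that there is `λ ⪰ 0` with
`‖λ‖_s ≤ 1` and `‖w_t‖² ≤ λ_t² R` for all `t`. -/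
def Fs (H : Type*) [NormedAddCommGroup H] [InnerProductSpace ℝ H]
    (T : ℕ) (s R : ℝ) : Set (Fin T → H) :=
  {w | ∃ lam : Fin T → ℝ, (∀ t, 0 ≤ lam t) ∧ (∑ t, lam t ^ s) ≤ 1 ∧
    ∀ t, ‖w t‖ ^ 2 ≤ lam t ^ 2 * R}

/-- Empirical Rademacher complexity of a class `F ⊆ H^T` of weight tuples, with respect to
the sampled feature vectors `φ_t^i`. -/
def ERC {H : Type*} [NormedAddCommGroup H] [InnerProductSpace ℝ H]
    (T N : ℕ) (φ : Fin T → Fin N → H) (F : Set (Fin T → H)) : ℝ :=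
  Eσ T N (fun σ => sSup {v : ℝ | ∃ w ∈ F,
    v = (2 / ((T : ℝ) * N)) * ∑ t, ∑ i, sgn (σ t i) * ⟪w t, φ t i⟫})

/-- The `ℓ_q` norm on `ℝ^T` for finite `0 < q < ∞`. -/
def lqNorm {T : ℕ} (q : ℝ) (u : Fin T → ℝ) : ℝ := (∑ t, |u t| ^ q) ^ (1 / q)

/-- The `ℓ_{s*}` norm on `ℝ^T`, where `s* = s/(s-1)` is the Hölder conjugate of `s ≥ 1`;
for `s = 1` this is the `ℓ_∞` (maximum) norm. -/
def dualNorm {T : ℕ} (s : ℝ) (u : Fin T → ℝ) : ℝ :=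
  if s = 1 then ⨆ t, |u t| else lqNorm (s / (s - 1)) u

/-! The supremum defining `R̂(F_s)` splits over `t`: for a fixed sign pattern, with
`v_t = Σ_i σ_t^i φ_t^i`, Cauchy–Schwarz gives `Σ_t ⟪w_t, v_t⟫ ≤ √R Σ_t λ_t ‖v_t‖`, with equality
for `w_t` a nonnegative multiple of `v_t`, and the supremum of `Σ_t λ_t ‖v_t‖` over the unit
`ℓ_s` ball is the dual norm `‖(‖v_t‖)_t‖_{s*}` (Hölder's inequality and its equality case).
Averaging over the signs gives the formula. -/

section DualNorm

variable {T : ℕ} {s : ℝ}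

theorem sum_mul_le_dualNorm (hs : 1 ≤ s) {u lam : Fin T → ℝ} (hu : ∀ t, 0 ≤ u t)
    (hlam : ∀ t, 0 ≤ lam t) (hsum : ∑ t, lam t ^ s ≤ 1) :
    ∑ t, lam t * u t ≤ dualNorm s u := by
  unfold dualNorm
  split_ifs with h1
  · subst h1
    have hle : ∀ t, u t ≤ ⨆ t, |u t| := fun t =>
      (le_abs_self _).trans (le_ciSup (f := fun t => |u t|) (Set.finite_range _).bddAbove t)
    have hM : 0 ≤ ⨆ t, |u t| := Real.iSup_nonneg fun t => abs_nonneg _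
    simp only [Real.rpow_one] at hsum
    calc ∑ t, lam t * u t ≤ ∑ t, lam t * ⨆ t, |u t| :=
          Finset.sum_le_sum fun t _ => mul_le_mul_of_nonneg_left (hle t) (hlam t)
      _ = (∑ t, lam t) * ⨆ t, |u t| := (Finset.sum_mul _ _ _).symm
      _ ≤ ⨆ t, |u t| := mul_le_of_le_one_left hM hsum
  · have hpq : s.HolderConjugate (s / (s - 1)) := .conjExponent (lt_of_le_of_ne hs (Ne.symm h1))
    calc ∑ t, lam t * u t
        ≤ (∑ t, lam t ^ s) ^ (1 / s) * (∑ t, u t ^ (s / (s - 1))) ^ (1 / (s / (s - 1))) :=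
          Real.inner_le_Lp_mul_Lq_of_nonneg _ hpq (fun t _ => hlam t) (fun t _ => hu t)
      _ ≤ 1 * lqNorm (s / (s - 1)) u := by
          simp only [lqNorm, abs_of_nonneg (hu _)]
          refine mul_le_mul_of_nonneg_right ?_
            (Real.rpow_nonneg (Finset.sum_nonneg fun t _ => Real.rpow_nonneg (hu t) _) _)
          exact Real.rpow_le_one (Finset.sum_nonneg fun t _ => Real.rpow_nonneg (hlam t) _)
            hsum (one_div_nonneg.mpr hpq.nonneg)
      _ = lqNorm (s / (s - 1)) u := one_mul _

theorem exists_sum_mul_eq_dualNorm_one (u : Fin T → ℝ) (hu : ∀ t, 0 ≤ u t) :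
    ∃ lam : Fin T → ℝ, (∀ t, 0 ≤ lam t) ∧ ∑ t, lam t ^ (1 : ℝ) ≤ 1 ∧
      ∑ t, lam t * u t = dualNorm 1 u := by
  rw [dualNorm, if_pos rfl]
  cases isEmpty_or_nonempty (Fin T)
  · exact ⟨0, fun _ => le_rfl, by simp, by simp [Real.iSup_of_isEmpty]⟩
  obtain ⟨t₀, ht₀⟩ := exists_eq_ciSup_of_finite (f := fun t => |u t|)
  refine ⟨Pi.single t₀ 1, fun t => ?_, by simp, ?_⟩
  · by_cases h : t = t₀ <;> simp [h]
  · simp [Pi.single_apply, ← ht₀, abs_of_nonneg (hu t₀)]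

theorem exists_sum_mul_eq_dualNorm_of_one_lt (hs : 1 < s) (u : Fin T → ℝ)
    (hu : ∀ t, 0 ≤ u t) :
    ∃ lam : Fin T → ℝ, (∀ t, 0 ≤ lam t) ∧ ∑ t, lam t ^ s ≤ 1 ∧
      ∑ t, lam t * u t = dualNorm s u := by
  have hpq : s.HolderConjugate (s / (s - 1)) := .conjExponent hs
  set q := s / (s - 1)
  rw [dualNorm, if_neg hs.ne']
  set M := lqNorm q u with hM_def
  have hM : 0 ≤ M := by rw [hM_def, lqNorm]; positivity
  have hMq : M ^ q = ∑ t, u t ^ q := by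
    simp only [hM_def, lqNorm, abs_of_nonneg (hu _)]
    rw [← Real.rpow_mul (Finset.sum_nonneg fun t _ => Real.rpow_nonneg (hu t) _),
      one_div_mul_cancel hpq.symm.ne_zero, Real.rpow_one]
  have hq1 : 0 < q - 1 := sub_pos.mpr hpq.symm.lt
  rcases hM.eq_or_lt with hM0 | hMpos
  · refine ⟨0, fun _ => le_rfl, by simp [Real.zero_rpow hpq.ne_zero], by simp [← hM0]⟩
  refine ⟨fun t => (u t / M) ^ (q - 1), fun t => Real.rpow_nonneg (div_nonneg (hu t) hM) _,
    ?_, ?_⟩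
  · have hpow : ∀ t, ((u t / M) ^ (q - 1)) ^ s = u t ^ q / M ^ q := fun t => by
      rw [← Real.rpow_mul (div_nonneg (hu t) hM), hpq.symm.sub_one_mul_conj,
        Real.div_rpow (hu t) hM]
    rw [Finset.sum_congr rfl fun t _ => hpow t, ← Finset.sum_div, ← hMq,
      div_self (Real.rpow_pos_of_pos hMpos q).ne']
  · have hterm : ∀ t, (u t / M) ^ (q - 1) * u t = u t ^ q / M ^ (q - 1) := fun t => by
      rw [Real.div_rpow (hu t) hM, div_mul_eq_mul_div,
        ← Real.rpow_add_one' (hu t) (by linarith), sub_add_cancel]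
    rw [Finset.sum_congr rfl fun t _ => hterm t, ← Finset.sum_div, ← hMq,
      ← Real.rpow_sub hMpos, sub_sub_cancel, Real.rpow_one]

theorem exists_sum_mul_eq_dualNorm (hs : 1 ≤ s) (u : Fin T → ℝ) (hu : ∀ t, 0 ≤ u t) :
    ∃ lam : Fin T → ℝ, (∀ t, 0 ≤ lam t) ∧ ∑ t, lam t ^ s ≤ 1 ∧
      ∑ t, lam t * u t = dualNorm s u := by
  rcases hs.eq_or_lt with rfl | hs
  · exact exists_sum_mul_eq_dualNorm_one u hu
  · exact exists_sum_mul_eq_dualNorm_of_one_lt hs u hu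

end DualNorm

section InnerProduct

variable {H : Type*} [NormedAddCommGroup H] [InnerProductSpace ℝ H]

theorem exists_norm_le_inner_eq_mul_norm (v : H) {c : ℝ} (hc : 0 ≤ c) :
    ∃ w : H, ‖w‖ ≤ c ∧ ⟪w, v⟫ = c * ‖v‖ := by
  rcases eq_or_ne v 0 with rfl | hv
  · exact ⟨0, by simpa using hc, by simp⟩
  have hv' : 0 < ‖v‖ := norm_pos_iff.mpr hv
  refine ⟨(c / ‖v‖) • v, ?_, ?_⟩
  · rw [norm_smul, Real.norm_of_nonneg (div_nonneg hc hv'.le), div_mul_cancel₀ _ hv'.ne']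
  · rw [real_inner_smul_left, real_inner_self_eq_norm_sq]
    field_simp

theorem mem_Fs_iff {T : ℕ} {s R : ℝ} (hR : 0 ≤ R) (w : Fin T → H) :
    w ∈ Fs H T s R ↔ ∃ lam : Fin T → ℝ, (∀ t, 0 ≤ lam t) ∧ ∑ t, lam t ^ s ≤ 1 ∧
      ∀ t, ‖w t‖ ≤ lam t * √R := by
  refine exists_congr fun lam => and_congr_right fun hlam => and_congr_right fun _ =>
    forall_congr' fun t => ?_
  rw [show lam t ^ 2 * R = (lam t * √R) ^ 2 by rw [mul_pow, Real.sq_sqrt hR]]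
  exact pow_le_pow_iff_left₀ (norm_nonneg _) (mul_nonneg (hlam t) (Real.sqrt_nonneg R))
    two_ne_zero

theorem isGreatest_sum_inner_Fs {T : ℕ} {s R : ℝ} (hR : 0 ≤ R) (hs : 1 ≤ s)
    (v : Fin T → H) :
    IsGreatest {x | ∃ w ∈ Fs H T s R, x = ∑ t, ⟪w t, v t⟫}
      (√R * dualNorm s fun t => ‖v t‖) := by
  constructor
  · obtain ⟨lam, hlam, hsum, hdual⟩ :=
      exists_sum_mul_eq_dualNorm hs (fun t => ‖v t‖) fun t => norm_nonneg _
    choose w hw_norm hw_inner using fun t =>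
      exists_norm_le_inner_eq_mul_norm (v t) (mul_nonneg (hlam t) (Real.sqrt_nonneg R))
    refine ⟨w, (mem_Fs_iff hR w).mpr ⟨lam, hlam, hsum, hw_norm⟩, ?_⟩
    simp only [hw_inner, ← hdual, Finset.mul_sum, mul_assoc, mul_left_comm (√R)]
  · rintro x ⟨w, hw, rfl⟩
    obtain ⟨lam, hlam, hsum, hw_norm⟩ := (mem_Fs_iff hR w).mp hw
    calc ∑ t, ⟪w t, v t⟫ ≤ ∑ t, lam t * √R * ‖v t‖ :=
          Finset.sum_le_sum fun t _ => (real_inner_le_norm _ _).trans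
            (mul_le_mul_of_nonneg_right (hw_norm t) (norm_nonneg _))
      _ = √R * ∑ t, lam t * ‖v t‖ := by
          rw [Finset.mul_sum]; exact Finset.sum_congr rfl fun t _ => by ring
      _ ≤ √R * dualNorm s fun t => ‖v t‖ :=
          mul_le_mul_of_nonneg_left
            (sum_mul_le_dualNorm hs (fun t => norm_nonneg _) hlam hsum) (Real.sqrt_nonneg R)

theorem sSup_mul_sum_inner_Fs {T : ℕ} {s R : ℝ} (hR : 0 ≤ R) (hs : 1 ≤ s)
    (v : Fin T → H) {c : ℝ} (hc : 0 ≤ c) :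
    sSup {x | ∃ w ∈ Fs H T s R, x = c * ∑ t, ⟪w t, v t⟫} =
      c * (√R * dualNorm s fun t => ‖v t‖) := by
  have hG := isGreatest_sum_inner_Fs hR hs v
  refine IsGreatest.csSup_eq ⟨?_, ?_⟩
  · obtain ⟨w, hw, hval⟩ := hG.1
    exact ⟨w, hw, by rw [hval]⟩
  · rintro x ⟨w, hw, rfl⟩
    exact mul_le_mul_of_nonneg_left (hG.2 ⟨w, hw, rfl⟩) hc

end InnerProduct

theorem Eσ_const_mul (T N : ℕ) (c : ℝ) (f : (Fin T → Fin N → Bool) → ℝ) :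
    Eσ T N (fun σ => c * f σ) = c * Eσ T N f := by
  simp only [Eσ, ← Finset.mul_sum, mul_div_assoc]

theorem erc_Fs_eq_general {H : Type*} [NormedAddCommGroup H] [InnerProductSpace ℝ H]
    (T N : ℕ) (R : ℝ) (hR : 0 < R)
    (φ : Fin T → Fin N → H) (s : ℝ) (hs : 1 ≤ s) :
    ERC T N φ (Fs H T s R) =
      (2 * Real.sqrt R / ((T : ℝ) * N)) *
        Eσ T N (fun σ => dualNorm s (fun t => ‖∑ i, sgn (σ t i) • φ t i‖)) := by
  have hsup (σ : Fin T → Fin N → Bool) :=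
    sSup_mul_sum_inner_Fs hR.le hs (fun t => ∑ i, sgn (σ t i) • φ t i)
      (c := 2 / ((T : ℝ) * N)) (by positivity)
  simp only [inner_sum, real_inner_smul_right] at hsup
  rw [ERC, ← Eσ_const_mul]
  simp only [hsup]
  congr 1
  funext σ
  ring

/-- For every `s ≥ 1`,
`R̂(F_s) = (2√R/(TN)) · E_σ ‖u‖_{s*}` with `u_t = ‖Σ_i σ_t^i φ_t^i‖`. -/
theorem erc_Fs_eq {H : Type*} [NormedAddCommGroup H] [InnerProductSpace ℝ H]
    (T N : ℕ) (hT : 0 < T) (hN : 0 < N) (R : ℝ) (hR : 0 < R)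
    (φ : Fin T → Fin N → H) (s : ℝ) (hs : 1 ≤ s) :
    ERC T N φ (Fs H T s R) =
      (2 * Real.sqrt R / ((T : ℝ) * N)) *
        Eσ T N (fun σ => dualNorm s (fun t => ‖∑ i, sgn (σ t i) • φ t i‖)) :=
  erc_Fs_eq_general T N R hR φ s hs

end
end

section
/- For every s > 1 (so that s* = s/(s−1) is finite), R̂(F_s) ≤ (2/(TN)) · √( R · s* · ( Σ_{t=1}^T ( Σ_{i=1}^N ‖φ_t^i‖² )^{s*/2} )^{2/s*} ); equivalently, R̂(F_s) ≤ (2/(TN)) √( R s* ‖(tr K_1, …, tr K_T)‖_{s*/2} ), where tr K_t = Σ_{i=1}^N ‖φ_t^i‖². -/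
/-!
For a fixed sign pattern `σ`, put `u_t = ∑ᵢ σ_t^i φ_t^i`. Hölder's inequality bounds the
supremum over `F_s` by `√R ‖(‖u_t‖)_t‖_{s*}`, since the `ℓ_{s*}` norm is dual to the `ℓ_s`
constraint on `λ`. Jensen moves the expectation inside the power `1/s*`, so it remains to bound
`E ‖u_t‖^{s*}` by `(s* tr K_t)^{s*/2}` (a Khintchine–Kahane inequality). For even moments,
`E ‖∑ᵢ σ^i v_i‖^{2r} ≤ (2r-1)‼ (∑ᵢ ‖v_i‖²)^r` follows by averaging over one sign at a time,
using `‖x+y‖^{2r} + ‖x-y‖^{2r} ≤ (‖x‖+‖y‖)^{2r} + (‖x‖-‖y‖)^{2r}` and the binomial expansion.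
For a real exponent `q ≥ 1`, pass to the moment `2r` with `r = ⌈q/2⌉` and use `(2r-1)‼ ≤ r^r ≤ q^r`.
-/

open scoped BigOperators
open RealInnerProductSpace

noncomputable section

open Finset

@[simp] lemma sgn_true : sgn true = 1 := rfl

@[simp] lemma sgn_false : sgn false = -1 := rfl

namespace Nat

lemma factorial_two_mul_eq_mul_doubleFactorial (m : ℕ) :
    (2 * m)! = 2 ^ m * m ! * (2 * m - 1)‼ := by
  cases m with
  | zero => rfl
  | succ m =>
    rw [show 2 * (m + 1) = 2 * m + 1 + 1 by ring, factorial_eq_mul_doubleFactorial,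
      show 2 * m + 1 + 1 = 2 * (m + 1) by ring, doubleFactorial_two_mul,
      show 2 * (m + 1) - 1 = 2 * m + 1 by omega]

lemma doubleFactorial_two_mul_sub_one_le (r : ℕ) : (2 * r - 1)‼ ≤ r ^ r := by
  refine Nat.le_of_mul_le_mul_left (c := 2 ^ r * r !) ?_ (by positivity)
  calc 2 ^ r * r ! * (2 * r - 1)‼ = (2 * r)! := (factorial_two_mul_eq_mul_doubleFactorial r).symm
    _ ≤ (2 * r) ^ r * r ! := factorial_two_mul_le r
    _ = 2 ^ r * r ! * r ^ r := by ring

lemma choose_two_mul_mul_doubleFactorial_le {r j : ℕ} (hjr : j ≤ r) :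
    (2 * r).choose (2 * j) * (2 * j - 1)‼ ≤ (2 * r - 1)‼ * r.choose j := by
  refine Nat.le_of_mul_le_mul_right (c := 2 ^ j * j ! * (2 ^ (r - j) * (r - j)!)) ?_
    (by positivity)
  calc (2 * r).choose (2 * j) * (2 * j - 1)‼ * (2 ^ j * j ! * (2 ^ (r - j) * (r - j)!))
      = (2 * r).choose (2 * j) * (2 * j)! * (2 ^ (r - j) * (r - j)!) := by
        rw [factorial_two_mul_eq_mul_doubleFactorial]; ring
    _ ≤ (2 * r).choose (2 * j) * (2 * j)! * (2 * (r - j))! :=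
        Nat.mul_le_mul_left _ (two_pow_mul_factorial_le_factorial_two_mul _)
    _ = (2 * r)! := by
        rw [show 2 * (r - j) = 2 * r - 2 * j by omega]
        exact choose_mul_factorial_mul_factorial (by omega)
    _ = (2 * r - 1)‼ * (r.choose j * j ! * (r - j)!) * 2 ^ r := by
        rw [choose_mul_factorial_mul_factorial hjr, factorial_two_mul_eq_mul_doubleFactorial]
        ring
    _ = (2 * r - 1)‼ * r.choose j * (2 ^ j * j ! * (2 ^ (r - j) * (r - j)!)) := by
        rw [show 2 ^ r = 2 ^ j * 2 ^ (r - j) by rw [← pow_add, Nat.add_sub_cancel' hjr]]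
        ring

end Nat

lemma pow_add_neg_pow_le {d e : ℝ} (h : |d| ≤ e) (k : ℕ) :
    d ^ k + (-d) ^ k ≤ e ^ k + (-e) ^ k := by
  rcases k.even_or_odd with hk | hk
  · rw [hk.neg_pow, hk.neg_pow, ← hk.pow_abs]
    gcongr
  · simp [hk.neg_pow]

lemma add_pow_add_sub_pow_le {a d e : ℝ} (ha : 0 ≤ a) (h : |d| ≤ e) (n : ℕ) :
    (a + d) ^ n + (a - d) ^ n ≤ (a + e) ^ n + (a - e) ^ n := by
  have expand : ∀ x : ℝ, (a + x) ^ n + (a - x) ^ n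
      = ∑ k ∈ range (n + 1), (x ^ k + (-x) ^ k) * (a ^ (n - k) * n.choose k) := by
    intro x
    rw [add_comm a, sub_eq_neg_add, add_pow, add_pow, ← sum_add_distrib]
    exact sum_congr rfl fun k _ => by ring
  rw [expand, expand]
  exact sum_le_sum fun k _ => mul_le_mul_of_nonneg_right (pow_add_neg_pow_le h k) (by positivity)

lemma sum_range_two_mul_add_one_eq_sum_even {M : Type*} [AddCommMonoid M] (f : ℕ → M)
    (hf : ∀ k, Odd k → f k = 0) (r : ℕ) :
    ∑ k ∈ range (2 * r + 1), f k = ∑ j ∈ range (r + 1), f (2 * j) := by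
  induction r with
  | zero => simp
  | succ r ih =>
    rw [sum_range_succ (fun j => f (2 * j)) (r + 1), ← ih,
      show 2 * (r + 1) + 1 = 2 * r + 1 + 1 + 1 by ring, sum_range_succ, sum_range_succ,
      hf _ (odd_two_mul_add_one r), add_zero, mul_add_one]

lemma add_pow_two_mul_add_sub_pow_two_mul (x y : ℝ) (r : ℕ) :
    (x + y) ^ (2 * r) + (x - y) ^ (2 * r)
      = 2 * ∑ j ∈ range (r + 1), (2 * r).choose (2 * j) * x ^ (2 * j) * (y ^ 2) ^ (r - j) := by
  rw [← (even_two_mul r).neg_pow (x - y), neg_sub, sub_eq_neg_add, add_pow, add_pow,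
    ← sum_add_distrib, mul_sum, sum_range_two_mul_add_one_eq_sum_even _ fun k hk => by
      simp [hk.neg_pow]]
  refine sum_congr rfl fun j _ => ?_
  rw [(even_two_mul j).neg_pow, ← pow_mul, ← Nat.mul_sub]
  ring

lemma expect_bool {K : Type*} [Semifield K] [CharZero K] (f : Bool → K) :
    𝔼 b, f b = (f true + f false) / 2 := by
  rw [Fintype.expect_eq_sum_div_card]
  simp

lemma expect_fin_succ_pi {β M : Type*} [Fintype β] [AddCommMonoid M] [Module ℚ≥0 M] {n : ℕ}
    (F : (Fin (n + 1) → β) → M) : 𝔼 b, F b = 𝔼 b', 𝔼 b₀, F (Fin.cons b₀ b') := by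
  rw [← Fintype.expect_equiv (Fin.consEquiv fun _ => β) (fun p => F (Fin.cons p.1 p.2)) F
    (fun _ => rfl), ← univ_product_univ, expect_product' univ univ (fun a b => F (Fin.cons a b)),
    expect_comm]

lemma expect_rpow_le_rpow_expect {ι : Type*} [Fintype ι] [Nonempty ι] {f : ι → ℝ}
    (hf : ∀ i, 0 ≤ f i) {p : ℝ} (hp₀ : 0 < p) (hp₁ : p ≤ 1) :
    𝔼 i, f i ^ p ≤ (𝔼 i, f i) ^ p := by
  have hw : ∑ _i : ι, (1 / Fintype.card ι : ℝ) = 1 := by simp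
  have hexp : ∀ g : ι → ℝ, 𝔼 i, g i = ∑ i, 1 / Fintype.card ι * g i := fun g => by
    rw [Fintype.expect_eq_sum_div_card, ← mul_sum, one_div, inv_mul_eq_div]
  have hmean := Real.arith_mean_le_rpow_mean univ (fun _ => (1 / Fintype.card ι : ℝ))
    (fun i => f i ^ p) (fun _ _ => by positivity) hw (fun i _ => by have := hf i; positivity)
    (one_le_one_div hp₀ hp₁)
  simp only [← Real.rpow_mul (hf _), mul_one_div_cancel hp₀.ne', Real.rpow_one, one_div_one_div]
    at hmean
  simpa only [hexp] using hmean

lemma expect_comp_eval {ι β M : Type*} [Fintype ι] [DecidableEq ι] [Fintype β] [Nonempty β]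
    [AddCommMonoid M] [Module ℚ≥0 M] (i : ι) (F : β → M) :
    𝔼 σ : ι → β, F (σ i) = 𝔼 b, F b := by
  rw [Fintype.expect_equiv (Equiv.funSplitAt i β) (fun σ => F (σ i)) (fun p => F p.1)
      (fun _ => rfl),
    ← univ_product_univ, expect_product' univ univ (fun b _ => F b)]
  simp only [Fintype.expect_const]

section Khintchine

variable {H : Type*} [NormedAddCommGroup H] [InnerProductSpace ℝ H]

open Nat

lemma sum_choose_two_mul_mul_doubleFactorial_le {S c : ℝ} (hS : 0 ≤ S) (hc : 0 ≤ c) (r : ℕ) :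
    ∑ j ∈ range (r + 1), (2 * r).choose (2 * j) * c ^ (r - j) * ((2 * j - 1)‼ * S ^ j)
      ≤ (2 * r - 1)‼ * (S + c) ^ r := by
  rw [add_pow, mul_sum]
  refine sum_le_sum fun j hj => ?_
  have key : ((2 * r).choose (2 * j) * (2 * j - 1)‼ : ℝ) ≤ (2 * r - 1)‼ * r.choose j := by
    exact_mod_cast choose_two_mul_mul_doubleFactorial_le (Nat.lt_succ_iff.mp (mem_range.mp hj))
  calc _ = ((2 * r).choose (2 * j) * (2 * j - 1)‼ : ℝ) * (S ^ j * c ^ (r - j)) := by ring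
    _ ≤ (2 * r - 1)‼ * r.choose j * (S ^ j * c ^ (r - j)) := by gcongr
    _ = _ := by ring

lemma norm_add_pow_add_norm_sub_pow_le (x y : H) (r : ℕ) :
    ‖x + y‖ ^ (2 * r) + ‖x - y‖ ^ (2 * r) ≤ (‖x‖ + ‖y‖) ^ (2 * r) + (‖x‖ - ‖y‖) ^ (2 * r) := by
  have hinner : |2 * ⟪x, y⟫| ≤ 2 * (‖x‖ * ‖y‖) := by
    rw [abs_mul, abs_two]
    gcongr
    exact abs_real_inner_le_norm x y
  -- `‖x ± y‖² = a ± 2⟪x, y⟫` and `(‖x‖ ± ‖y‖)² = a ± 2‖x‖‖y‖` with `a = ‖x‖² + ‖y‖²`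
  have key := add_pow_add_sub_pow_le (by positivity : 0 ≤ ‖x‖ ^ 2 + ‖y‖ ^ 2) hinner r
  simp only [pow_mul, norm_add_sq_real, norm_sub_sq_real]
  convert key using 2 <;> ring

lemma expect_norm_add_sgn_smul_pow_le (x y : H) (r : ℕ) :
    𝔼 b, ‖x + sgn b • y‖ ^ (2 * r)
      ≤ ∑ j ∈ range (r + 1), (2 * r).choose (2 * j) * ‖x‖ ^ (2 * j) * (‖y‖ ^ 2) ^ (r - j) := by
  rw [expect_bool, div_le_iff₀ two_pos, mul_comm _ (2 : ℝ), ← add_pow_two_mul_add_sub_pow_two_mul]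
  simpa [← sub_eq_add_neg] using norm_add_pow_add_norm_sub_pow_le x y r

theorem expect_norm_rademacher_sum_pow_le {n : ℕ} (v : Fin n → H) (r : ℕ) :
    𝔼 b : Fin n → Bool, ‖∑ i, sgn (b i) • v i‖ ^ (2 * r)
      ≤ (2 * r - 1)‼ * (∑ i, ‖v i‖ ^ 2) ^ r := by
  induction n generalizing r with
  | zero => cases r <;> simp
  | succ n ih =>
    set S := ∑ i, ‖v (Fin.succ i)‖ ^ 2
    set c := ‖v 0‖ ^ 2
    calc 𝔼 b : Fin (n + 1) → Bool, ‖∑ i, sgn (b i) • v i‖ ^ (2 * r)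
        = 𝔼 b' : Fin n → Bool, 𝔼 b₀,
            ‖∑ i, sgn (b' i) • v i.succ + sgn b₀ • v 0‖ ^ (2 * r) := by
          rw [expect_fin_succ_pi]
          simp [Fin.sum_univ_succ, add_comm]
      _ ≤ 𝔼 b' : Fin n → Bool, ∑ j ∈ range (r + 1),
            (2 * r).choose (2 * j) * ‖∑ i, sgn (b' i) • v i.succ‖ ^ (2 * j) * c ^ (r - j) :=
          expect_le_expect fun b' _ => expect_norm_add_sgn_smul_pow_le _ _ r
      _ = ∑ j ∈ range (r + 1), (2 * r).choose (2 * j) * c ^ (r - j) *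
            𝔼 b' : Fin n → Bool, ‖∑ i, sgn (b' i) • v i.succ‖ ^ (2 * j) := by
          rw [expect_sum_comm]
          refine sum_congr rfl fun j _ => ?_
          rw [mul_expect]
          exact expect_congr rfl fun b' _ => by ring
      _ ≤ ∑ j ∈ range (r + 1), (2 * r).choose (2 * j) * c ^ (r - j) *
            ((2 * j - 1)‼ * S ^ j) := by
          gcongr with j
          exact ih _ j
      _ ≤ (2 * r - 1)‼ * (∑ i, ‖v i‖ ^ 2) ^ r := by
          rw [Fin.sum_univ_succ, add_comm (‖v 0‖ ^ 2)]
          exact sum_choose_two_mul_mul_doubleFactorial_le (by positivity : 0 ≤ S)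
            (by positivity : 0 ≤ c) r

theorem expect_norm_rademacher_sum_rpow_le {n : ℕ} (v : Fin n → H) {q : ℝ} (hq : 1 ≤ q) :
    𝔼 b : Fin n → Bool, ‖∑ i, sgn (b i) • v i‖ ^ q ≤ (q * ∑ i, ‖v i‖ ^ 2) ^ (q / 2) := by
  set r := ⌈q / 2⌉₊
  have hr₀ : 0 < r := Nat.ceil_pos.mpr (by positivity)
  have hqr : q ≤ 2 * r := by linarith [Nat.le_ceil (q / 2)]
  have hrq : (r : ℝ) ≤ q := by
    rcases le_or_gt r 1 with h | h
    · exact (Nat.cast_le_one.mpr h).trans hq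
    · have : (2 : ℝ) ≤ r := by exact_mod_cast h
      linarith [Nat.ceil_lt_add_one (by positivity : 0 ≤ q / 2)]
  set τ := ∑ i, ‖v i‖ ^ 2
  have hτ : 0 ≤ τ := by positivity
  calc 𝔼 b : Fin n → Bool, ‖∑ i, sgn (b i) • v i‖ ^ q
      = 𝔼 b : Fin n → Bool, (‖∑ i, sgn (b i) • v i‖ ^ (2 * r)) ^ (q / (2 * r)) := by
        refine expect_congr rfl fun b _ => ?_
        rw [← Real.rpow_natCast, ← Real.rpow_mul (norm_nonneg _)]
        push_cast
        field_simp
    _ ≤ (𝔼 b : Fin n → Bool, ‖∑ i, sgn (b i) • v i‖ ^ (2 * r)) ^ (q / (2 * r)) :=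
        expect_rpow_le_rpow_expect (fun _ => by positivity) (by positivity)
          ((div_le_one (by positivity)).mpr hqr)
    _ ≤ ((2 * r - 1)‼ * τ ^ r) ^ (q / (2 * r)) := by
        gcongr
        exact expect_norm_rademacher_sum_pow_le v r
    _ ≤ ((r * τ) ^ r) ^ (q / (2 * r)) := by
        rw [mul_pow]
        gcongr
        exact_mod_cast Nat.doubleFactorial_two_mul_sub_one_le r
    _ = (r * τ) ^ (q / 2) := by
        rw [← Real.rpow_natCast, ← Real.rpow_mul (by positivity)]
        congr 1
        field_simp
    _ ≤ (q * τ) ^ (q / 2) := by gcongr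

end Khintchine

lemma sum_inner_le_of_mem_Fs {H : Type*} [NormedAddCommGroup H] [InnerProductSpace ℝ H]
    {T : ℕ} {s q R : ℝ} (hsq : s.HolderConjugate q) (hR : 0 ≤ R) {w : Fin T → H}
    (hw : w ∈ Fs H T s R) (g : Fin T → H) :
    ∑ t, ⟪w t, g t⟫ ≤ √R * (∑ t, ‖g t‖ ^ q) ^ (1 / q) := by
  obtain ⟨lam, hlam₀, hlam_s, hw⟩ := hw
  have hwt : ∀ t, ‖w t‖ ≤ √R * lam t := fun t =>
    (pow_le_pow_iff_left₀ (norm_nonneg _) (by have := hlam₀ t; positivity) two_ne_zero).mp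
      (by rw [mul_pow, Real.sq_sqrt hR, mul_comm]; exact hw t)
  have hlam : (∑ t, lam t ^ s) ^ (1 / s) ≤ 1 :=
    Real.rpow_le_one (sum_nonneg fun t _ => by have := hlam₀ t; positivity) hlam_s
      hsq.one_div_nonneg
  calc ∑ t, ⟪w t, g t⟫ ≤ ∑ t, √R * (lam t * ‖g t‖) := by
        refine sum_le_sum fun t _ => (real_inner_le_norm _ _).trans ?_
        rw [← mul_assoc]
        gcongr
        exact hwt t
    _ = √R * ∑ t, lam t * ‖g t‖ := by rw [mul_sum]
    _ ≤ √R * ((∑ t, lam t ^ s) ^ (1 / s) * (∑ t, ‖g t‖ ^ q) ^ (1 / q)) := by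
        gcongr
        exact Real.inner_le_Lp_mul_Lq_of_nonneg univ hsq (fun t _ => hlam₀ t) fun _ _ =>
          norm_nonneg _
    _ ≤ √R * (∑ t, ‖g t‖ ^ q) ^ (1 / q) := by
        gcongr
        exact mul_le_of_le_one_left (by positivity) hlam

lemma ERC_Fs_le {H : Type*} [NormedAddCommGroup H] [InnerProductSpace ℝ H] {T N : ℕ}
    (φ : Fin T → Fin N → H) {s q R : ℝ} (hsq : s.HolderConjugate q) (hR : 0 ≤ R) :
    ERC T N φ (Fs H T s R) ≤ 2 / ((T : ℝ) * N) * √R *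
      𝔼 σ : Fin T → Fin N → Bool, (∑ t, ‖∑ i, sgn (σ t i) • φ t i‖ ^ q) ^ (1 / q) := by
  rw [ERC, Eσ, ← Fintype.expect_eq_sum_div_card, mul_expect]
  refine expect_le_expect fun σ _ => Real.sSup_le ?_ (by positivity)
  rintro _ ⟨w, hw, rfl⟩
  rw [mul_assoc]
  gcongr
  simpa only [inner_sum, real_inner_smul_right] using
    sum_inner_le_of_mem_Fs hsq hR hw fun t => ∑ i, sgn (σ t i) • φ t i

lemma expect_lq_norm_rademacher_sums_le {H : Type*} [NormedAddCommGroup H]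
    [InnerProductSpace ℝ H] {T N : ℕ} (φ : Fin T → Fin N → H) {q : ℝ} (hq : 1 ≤ q) :
    𝔼 σ : Fin T → Fin N → Bool, (∑ t, ‖∑ i, sgn (σ t i) • φ t i‖ ^ q) ^ (1 / q)
      ≤ (∑ t, (q * ∑ i, ‖φ t i‖ ^ 2) ^ (q / 2)) ^ (1 / q) := by
  calc 𝔼 σ : Fin T → Fin N → Bool, (∑ t, ‖∑ i, sgn (σ t i) • φ t i‖ ^ q) ^ (1 / q)
      ≤ (𝔼 σ : Fin T → Fin N → Bool, ∑ t, ‖∑ i, sgn (σ t i) • φ t i‖ ^ q) ^ (1 / q) :=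
        expect_rpow_le_rpow_expect (fun σ => by positivity) (by positivity)
          ((div_le_one (by positivity)).mpr hq)
    _ = (∑ t, 𝔼 b : Fin N → Bool, ‖∑ i, sgn (b i) • φ t i‖ ^ q) ^ (1 / q) := by
        rw [expect_sum_comm, sum_congr rfl fun t _ =>
          expect_comp_eval t (fun b : Fin N → Bool => ‖∑ i, sgn (b i) • φ t i‖ ^ q)]
    _ ≤ (∑ t, (q * ∑ i, ‖φ t i‖ ^ 2) ^ (q / 2)) ^ (1 / q) := by
        gcongr with t
        exact expect_norm_rademacher_sum_rpow_le (φ t) hq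

lemma sqrt_mul_rpow_sum_mul_rpow {ι : Type*} [Fintype ι] {R q : ℝ} (hR : 0 ≤ R) (hq : 0 < q)
    {a : ι → ℝ} (ha : ∀ i, 0 ≤ a i) :
    √R * (∑ i, (q * a i) ^ (q / 2)) ^ (1 / q) = √(R * q * (∑ i, a i ^ (q / 2)) ^ (2 / q)) := by
  have hsum : 0 ≤ ∑ i, a i ^ (q / 2) := sum_nonneg fun i _ => by have := ha i; positivity
  have e₁ : q / 2 * (1 / q) = 1 / 2 := by field_simp
  have e₂ : 2 / q * (1 / 2) = 1 / q := by field_simp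
  rw [sum_congr rfl fun i _ => Real.mul_rpow hq.le (ha i), ← mul_sum,
    Real.mul_rpow (by positivity) hsum, ← Real.rpow_mul hq.le, Real.sqrt_eq_rpow,
    Real.sqrt_eq_rpow, Real.mul_rpow (by positivity) (by positivity),
    Real.mul_rpow hR hq.le, ← Real.rpow_mul hsum, e₁, e₂]
  ring

theorem erc_Fs_trace_bound_general {H : Type*} [NormedAddCommGroup H] [InnerProductSpace ℝ H]
    (T N : ℕ) (R : ℝ) (hR : 0 < R)
    (φ : Fin T → Fin N → H) (s : ℝ) (hs : 1 < s) :
    ERC T N φ (Fs H T s R) ≤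
      (2 / ((T : ℝ) * N)) *
        Real.sqrt (R * (s / (s - 1)) *
          (∑ t, (∑ i, ‖φ t i‖ ^ 2) ^ ((s / (s - 1)) / 2)) ^ (2 / (s / (s - 1)))) := by
  set q := s / (s - 1)
  have hsq : s.HolderConjugate q := (Real.holderConjugate_iff_eq_conjExponent hs).mpr rfl
  calc ERC T N φ (Fs H T s R)
      ≤ 2 / ((T : ℝ) * N) * √R *
          𝔼 σ : Fin T → Fin N → Bool, (∑ t, ‖∑ i, sgn (σ t i) • φ t i‖ ^ q) ^ (1 / q) :=
        ERC_Fs_le φ hsq hR.le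
    _ ≤ 2 / ((T : ℝ) * N) * √R * (∑ t, (q * ∑ i, ‖φ t i‖ ^ 2) ^ (q / 2)) ^ (1 / q) := by
        gcongr
        exact expect_lq_norm_rademacher_sums_le φ hsq.symm.lt.le
    _ = 2 / ((T : ℝ) * N) * √(R * q * (∑ t, (∑ i, ‖φ t i‖ ^ 2) ^ (q / 2)) ^ (2 / q)) := by
        rw [mul_assoc, sqrt_mul_rpow_sum_mul_rpow hR.le hsq.symm.pos fun t => by positivity]

/-- For `s > 1`, with `s* = s/(s-1)`,
`R̂(F_s) ≤ (2/(TN)) √( R s* (Σ_t (tr K_t)^{s*/2})^{2/s*} )`, where `tr K_t = Σ_i ‖φ_t^i‖²`. -/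
theorem erc_Fs_trace_bound {H : Type*} [NormedAddCommGroup H] [InnerProductSpace ℝ H]
    (T N : ℕ) (hT : 0 < T) (hN : 0 < N) (R : ℝ) (hR : 0 < R)
    (φ : Fin T → Fin N → H) (s : ℝ) (hs : 1 < s) :
    ERC T N φ (Fs H T s R) ≤
      (2 / ((T : ℝ) * N)) *
        Real.sqrt (R * (s / (s - 1)) *
          (∑ t, (∑ i, ‖φ t i‖ ^ 2) ^ ((s / (s - 1)) / 2)) ^ (2 / (s / (s - 1)))) :=
  erc_Fs_trace_bound_general T N R hR φ s hs

end
end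

section
/- Let H be a real inner product space, let x_1,…,x_n ∈ H, let p ≥ 1, and let σ_1,…,σ_n be i.i.d. Rademacher random variables (uniform on {−1,+1}). Then E_σ[ ‖Σ_{i=1}^n σ_i x_i‖^p ] ≤ ( p · Σ_{i=1}^n ‖x_i‖² )^{p/2}. -/
open scoped BigOperators

noncomputable section

/-- Expectation over i.i.d. Rademacher variables `σ_1,…,σ_n`, realized as the uniform
average over all `2^n` sign patterns. -/
def Erad (n : ℕ) (f : (Fin n → Bool) → ℝ) : ℝ :=
  (∑ σ : Fin n → Bool, f σ) / (Fintype.card (Fin n → Bool) : ℝ)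

/-!
Write `S σ = ∑ i, σ i • x i`. Since `‖S‖ ^ (2c+2) = ∑ i, σ i ⟪x i, S⟫ ‖S‖ ^ (2c)`, pairing each
sign pattern with the one where `σ i` is flipped (a discrete integration by parts) and a
two-point inequality give `E ‖S‖ ^ (2c+2) ≤ (2c+1) (∑ i, ‖x i‖²) E ‖S‖ ^ (2c)`, hence
`E ‖S‖ ^ (2m) ≤ (2m-1)!! (∑ i, ‖x i‖²) ^ m ≤ (m ∑ i, ‖x i‖²) ^ m`. For real `p ≥ 1` take
`m = ⌊p⌋₊`, so that `m ≤ p ≤ 2m`, and conclude by Jensen: `E ‖S‖ ^ p ≤ (E ‖S‖ ^ (2m)) ^ (p/2m)`.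
-/

open Finset RealInnerProductSpace

lemma sgn_not (b : Bool) : sgn (!b) = -sgn b := by
  cases b <;> simp [sgn]

lemma abs_sgn (b : Bool) : |sgn b| = 1 := by
  cases b <;> simp [sgn]

lemma Fintype.sum_le_sum_of_add_comp_perm_le {α β : Type*} [Fintype α] [AddCommMonoid β]
    [LinearOrder β] [IsOrderedCancelAddMonoid β] {f g : α → β} (e : Equiv.Perm α)
    (h : ∀ a, f a + f (e a) ≤ g a + g (e a)) : ∑ a, f a ≤ ∑ a, g a := by
  have hsum := Finset.sum_le_sum fun a (_ : a ∈ univ) => h a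
  rw [sum_add_distrib, sum_add_distrib, Equiv.sum_comp e f, Equiv.sum_comp e g] at hsum
  exact le_of_not_gt fun hlt => (add_lt_add hlt hlt).not_ge hsum

theorem pow_mul_pow_add_pow_mul_pow_le {R : Type*} [CommRing R] [LinearOrder R]
    [IsStrictOrderedRing R] {a b : R} (ha : 0 ≤ a) (hb : 0 ≤ b) (i j : ℕ) :
    a ^ i * b ^ j + a ^ j * b ^ i ≤ a ^ (i + j) + b ^ (i + j) := by
  have hsame_sign : 0 ≤ (a ^ i - b ^ i) * (a ^ j - b ^ j) := by
    rcases le_total a b with hab | hab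
    · exact mul_nonneg_of_nonpos_of_nonpos (sub_nonpos.2 (pow_le_pow_left₀ ha hab i))
        (sub_nonpos.2 (pow_le_pow_left₀ ha hab j))
    · exact mul_nonneg (sub_nonneg.2 (pow_le_pow_left₀ hb hab i))
        (sub_nonneg.2 (pow_le_pow_left₀ hb hab j))
  rw [pow_add, pow_add]
  linarith

theorem two_mul_geom_sum₂_le {R : Type*} [CommRing R] [LinearOrder R] [IsStrictOrderedRing R]
    {a b : R} (ha : 0 ≤ a) (hb : 0 ≤ b) (c : ℕ) :
    2 * ∑ i ∈ range (c + 1), a ^ i * b ^ (c - i) ≤ (c + 1) * (a ^ c + b ^ c) := by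
  have hreflect : ∑ i ∈ range (c + 1), a ^ (c - i) * b ^ i
      = ∑ i ∈ range (c + 1), a ^ i * b ^ (c - i) := by
    rw [← sum_range_reflect]
    refine sum_congr rfl fun i hi => ?_
    rw [add_tsub_cancel_right, Nat.sub_sub_self (Nat.lt_succ_iff.mp (mem_range.mp hi))]
  calc 2 * ∑ i ∈ range (c + 1), a ^ i * b ^ (c - i)
      = ∑ i ∈ range (c + 1), (a ^ i * b ^ (c - i) + a ^ (c - i) * b ^ i) := by
        rw [sum_add_distrib, hreflect, two_mul]
    _ ≤ ∑ _i ∈ range (c + 1), (a ^ c + b ^ c) := by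
        refine sum_le_sum fun i hi => ?_
        have hic : i + (c - i) = c := Nat.add_sub_cancel' (Nat.lt_succ_iff.mp (mem_range.mp hi))
        simpa only [hic] using pow_mul_pow_add_pow_mul_pow_le ha hb i (c - i)
    _ = (c + 1) * (a ^ c + b ^ c) := by
        rw [sum_const, card_range, nsmul_eq_mul]; push_cast; ring

/-- The discrete form of the Hermite–Hadamard inequality for the convex function `t ↦ t ^ c`. -/
theorem two_mul_sub_mul_pow_sub_pow_le {R : Type*} [CommRing R] [LinearOrder R]
    [IsStrictOrderedRing R] {a b : R} (ha : 0 ≤ a) (hb : 0 ≤ b) (c : ℕ) :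
    2 * ((a - b) * (a ^ (c + 1) - b ^ (c + 1))) ≤ (c + 1) * (a - b) ^ 2 * (a ^ c + b ^ c) := by
  rw [← geom_sum₂_mul]
  calc 2 * ((a - b) * ((∑ i ∈ range (c + 1), a ^ i * b ^ (c - i)) * (a - b)))
      = (a - b) ^ 2 * (2 * ∑ i ∈ range (c + 1), a ^ i * b ^ (c - i)) := by ring
    _ ≤ (a - b) ^ 2 * ((c + 1) * (a ^ c + b ^ c)) :=
        mul_le_mul_of_nonneg_left (two_mul_geom_sum₂_le ha hb c) (sq_nonneg _)
    _ = (c + 1) * (a - b) ^ 2 * (a ^ c + b ^ c) := by ring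

/-- With `a = ‖u‖`, `b = ‖v‖`, Cauchy–Schwarz `⟪u, v⟫ ≤ a b` reduces this to
`two_mul_sub_mul_pow_sub_pow_le` for the exponent `2c`. -/
theorem inner_mul_norm_pow_sub_inner_mul_norm_pow_le {H : Type*} [NormedAddCommGroup H]
    [InnerProductSpace ℝ H] {u v y : H} (h : u - v = (2 : ℝ) • y) (c : ℕ) :
    ⟪y, u⟫ * ‖u‖ ^ (2 * c) - ⟪y, v⟫ * ‖v‖ ^ (2 * c)
      ≤ (2 * c + 1) * ‖y‖ ^ 2 * (‖u‖ ^ (2 * c) + ‖v‖ ^ (2 * c)) := by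
  have hu : 2 * ⟪y, u⟫ = ‖u‖ ^ 2 - ⟪u, v⟫ := by
    rw [← real_inner_smul_left, ← h, inner_sub_left, real_inner_self_eq_norm_sq, real_inner_comm]
  have hv : 2 * ⟪y, v⟫ = ⟪u, v⟫ - ‖v‖ ^ 2 := by
    rw [← real_inner_smul_left, ← h, inner_sub_left, real_inner_self_eq_norm_sq]
  have hy : 4 * ‖y‖ ^ 2 = ‖u‖ ^ 2 - 2 * ⟪u, v⟫ + ‖v‖ ^ 2 := by
    rw [← norm_sub_sq_real, h, norm_smul, mul_pow]
    norm_num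
  have hcs : ⟪u, v⟫ ≤ ‖u‖ * ‖v‖ := real_inner_le_norm u v
  have hcs_gap : 0 ≤ 2 * c * ((‖u‖ * ‖v‖ - ⟪u, v⟫) * (‖u‖ ^ (2 * c) + ‖v‖ ^ (2 * c))) := by
    positivity
  have hscalar := two_mul_sub_mul_pow_sub_pow_le (norm_nonneg u) (norm_nonneg v) (2 * c)
  push_cast at hscalar
  have h1 : ⟪y, u⟫ = (‖u‖ ^ 2 - ⟪u, v⟫) / 2 := by linarith
  have h2 : ⟪y, v⟫ = (⟪u, v⟫ - ‖v‖ ^ 2) / 2 := by linarith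
  have h3 : ‖y‖ ^ 2 = (‖u‖ ^ 2 - 2 * ⟪u, v⟫ + ‖v‖ ^ 2) / 4 := by linarith
  rw [h1, h2, h3]
  linear_combination (1 / 2 : ℝ) * hcs_gap + (1 / 4 : ℝ) * hscalar

def flipAt {ι : Type*} [DecidableEq ι] (i : ι) : Equiv.Perm (ι → Bool) :=
  Function.Involutive.toPerm (fun σ => Function.update σ i (!σ i)) fun σ => by simp

@[simp] lemma flipAt_apply {ι : Type*} [DecidableEq ι] (i : ι) (σ : ι → Bool) :
    flipAt i σ = Function.update σ i (!σ i) := rfl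

section SignedSum

variable {ι H : Type*} [Fintype ι]

def signedSum [AddCommMonoid H] [Module ℝ H] (x : ι → H) (σ : ι → Bool) : H :=
  ∑ i, sgn (σ i) • x i

lemma signedSum_update [DecidableEq ι] [AddCommGroup H] [Module ℝ H] (x : ι → H)
    (σ : ι → Bool) (i : ι) (b : Bool) :
    signedSum x (Function.update σ i b) = signedSum x σ + (sgn b - sgn (σ i)) • x i := by
  simp only [signedSum, Function.apply_update (fun j c => sgn c • x j),
    sum_update_of_mem (mem_univ i), sub_smul, ← add_sum_erase _ _ (mem_univ i),
    sdiff_singleton_eq_erase]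
  abel

lemma signedSum_flipAt [DecidableEq ι] [AddCommGroup H] [Module ℝ H] (x : ι → H)
    (σ : ι → Bool) (i : ι) :
    signedSum x (flipAt i σ) = signedSum x σ - (2 * sgn (σ i)) • x i := by
  rw [flipAt_apply, signedSum_update, sgn_not]
  module

variable [NormedAddCommGroup H] [InnerProductSpace ℝ H]

lemma norm_signedSum_sq (x : ι → H) (σ : ι → Bool) :
    ‖signedSum x σ‖ ^ 2 = ∑ i, sgn (σ i) * ⟪x i, signedSum x σ⟫ := by
  rw [← real_inner_self_eq_norm_sq]
  simp only [signedSum, sum_inner, real_inner_smul_left]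

variable [DecidableEq ι]

/-- Discrete integration by parts in the `i`-th sign. -/
lemma sum_sgn_mul_inner_signedSum_le (x : ι → H) (i : ι) (c : ℕ) :
    ∑ σ, sgn (σ i) * (⟪x i, signedSum x σ⟫ * ‖signedSum x σ‖ ^ (2 * c))
      ≤ ∑ σ, (2 * c + 1) * ‖x i‖ ^ 2 * ‖signedSum x σ‖ ^ (2 * c) := by
  refine Fintype.sum_le_sum_of_add_comp_perm_le (flipAt i) fun σ => ?_
  have hflip : (flipAt i σ) i = !σ i := by simp
  have hy : ‖sgn (σ i) • x i‖ = ‖x i‖ := by rw [norm_smul, Real.norm_eq_abs, abs_sgn, one_mul]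
  have htwo_point := inner_mul_norm_pow_sub_inner_mul_norm_pow_le
    (u := signedSum x σ) (v := signedSum x (flipAt i σ)) (y := sgn (σ i) • x i)
    (by rw [signedSum_flipAt, sub_sub_cancel, smul_smul]) c
  rw [hy, real_inner_smul_left, real_inner_smul_left] at htwo_point
  rw [hflip, sgn_not]
  linarith

theorem sum_norm_signedSum_pow_succ_le (x : ι → H) (c : ℕ) :
    ∑ σ, ‖signedSum x σ‖ ^ (2 * c + 2)
      ≤ (2 * c + 1) * (∑ i, ‖x i‖ ^ 2) * ∑ σ, ‖signedSum x σ‖ ^ (2 * c) := by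
  calc ∑ σ, ‖signedSum x σ‖ ^ (2 * c + 2)
      = ∑ i, ∑ σ, sgn (σ i) * (⟪x i, signedSum x σ⟫ * ‖signedSum x σ‖ ^ (2 * c)) := by
        rw [sum_comm]
        refine sum_congr rfl fun σ _ => ?_
        rw [pow_add, mul_comm, norm_signedSum_sq, sum_mul]
        exact sum_congr rfl fun i _ => by ring
    _ ≤ ∑ i, ∑ σ, (2 * c + 1) * ‖x i‖ ^ 2 * ‖signedSum x σ‖ ^ (2 * c) :=
        sum_le_sum fun i _ => sum_sgn_mul_inner_signedSum_le x i c
    _ = (2 * c + 1) * (∑ i, ‖x i‖ ^ 2) * ∑ σ, ‖signedSum x σ‖ ^ (2 * c) := by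
        simp only [← mul_sum, ← sum_mul]

theorem sum_norm_signedSum_pow_le (x : ι → H) (m : ℕ) :
    ∑ σ, ‖signedSum x σ‖ ^ (2 * m)
      ≤ (∏ j ∈ range m, (2 * j + 1 : ℕ)) * (∑ i, ‖x i‖ ^ 2) ^ m * Fintype.card (ι → Bool) := by
  induction m with
  | zero => simp
  | succ m ih =>
    calc ∑ σ, ‖signedSum x σ‖ ^ (2 * (m + 1))
        ≤ (2 * m + 1) * (∑ i, ‖x i‖ ^ 2) * ∑ σ, ‖signedSum x σ‖ ^ (2 * m) :=
          sum_norm_signedSum_pow_succ_le x m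
      _ ≤ (2 * m + 1) * (∑ i, ‖x i‖ ^ 2) *
            ((∏ j ∈ range m, (2 * j + 1 : ℕ)) * (∑ i, ‖x i‖ ^ 2) ^ m *
              Fintype.card (ι → Bool)) := by
          gcongr
      _ = _ := by
          rw [prod_range_succ]
          push_cast
          ring

end SignedSum

theorem prod_range_two_mul_add_one_le_pow_self (m : ℕ) :
    ∏ j ∈ range m, (2 * j + 1) ≤ m ^ m := by
  have hpair : ∀ j ∈ range m, (2 * j + 1) * (2 * (m - 1 - j) + 1) ≤ m * m := by
    intro j hj
    obtain ⟨k, rfl⟩ : ∃ k, m = j + k + 1 := ⟨m - 1 - j, by have := mem_range.mp hj; omega⟩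
    rw [show j + k + 1 - 1 - j = k by omega]
    nlinarith [sq_nonneg ((j : ℤ) - k)]
  rw [← Nat.mul_self_le_mul_self_iff, ← mul_pow]
  calc (∏ j ∈ range m, (2 * j + 1)) * ∏ j ∈ range m, (2 * j + 1)
      = ∏ j ∈ range m, (2 * j + 1) * (2 * (m - 1 - j) + 1) := by
        rw [prod_mul_distrib, prod_range_reflect (fun j => 2 * j + 1) m]
    _ ≤ ∏ _j ∈ range m, m * m := prod_le_prod' hpair
    _ = (m * m) ^ m := by rw [prod_const, card_range]

lemma Erad_eq_sum_mul (n : ℕ) (f : (Fin n → Bool) → ℝ) :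
    Erad n f = ∑ σ, (Fintype.card (Fin n → Bool) : ℝ)⁻¹ * f σ := by
  rw [Erad, div_eq_inv_mul, mul_sum]

theorem Erad_rpow_le_rpow_Erad {n : ℕ} {f : (Fin n → Bool) → ℝ} (hf : ∀ σ, 0 ≤ f σ) {p q : ℝ}
    (hp : 0 < p) (hpq : p ≤ q) :
    Erad n (fun σ => f σ ^ p) ≤ Erad n (fun σ => f σ ^ q) ^ (p / q) := by
  have hq : 0 < q := hp.trans_le hpq
  have hweights : ∑ _σ : Fin n → Bool, (Fintype.card (Fin n → Bool) : ℝ)⁻¹ = 1 := by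
    rw [sum_const, card_univ, nsmul_eq_mul, mul_inv_cancel₀ (by positivity)]
  have jensen := Real.arith_mean_le_rpow_mean univ (fun _ => _) (fun σ => f σ ^ p)
    (fun _ _ => by positivity) hweights (fun σ _ => by have := hf σ; positivity)
    ((one_le_div hp).mpr hpq)
  simp only [← Real.rpow_mul (hf _), mul_div_cancel₀ q hp.ne', one_div_div] at jensen
  simpa only [Erad_eq_sum_mul] using jensen

theorem exists_nat_le_and_le_two_mul {p : ℝ} (hp : 1 ≤ p) :
    ∃ m : ℕ, (m : ℝ) ≤ p ∧ p ≤ 2 * m := by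
  refine ⟨⌊p⌋₊, Nat.floor_le (by linarith), ?_⟩
  have hfloor : (1 : ℝ) ≤ ⌊p⌋₊ := by exact_mod_cast (Nat.one_le_floor_iff p).mpr hp
  linarith [Nat.lt_floor_add_one p]

lemma Erad_nonneg {n : ℕ} {f : (Fin n → Bool) → ℝ} (hf : ∀ σ, 0 ≤ f σ) : 0 ≤ Erad n f :=
  div_nonneg (sum_nonneg fun σ _ => hf σ) (Nat.cast_nonneg _)

theorem Erad_norm_signedSum_pow_le {H : Type*} [NormedAddCommGroup H] [InnerProductSpace ℝ H]
    {n : ℕ} (x : Fin n → H) (m : ℕ) :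
    Erad n (fun σ => ‖signedSum x σ‖ ^ (2 * m)) ≤ (m * ∑ i, ‖x i‖ ^ 2) ^ m := by
  have hprod : ((∏ j ∈ range m, (2 * j + 1) : ℕ) : ℝ) ≤ (m : ℝ) ^ m := by
    exact_mod_cast prod_range_two_mul_add_one_le_pow_self m
  rw [Erad, div_le_iff₀ (by positivity), mul_pow]
  grw [sum_norm_signedSum_pow_le x m, hprod]

/-- (Khintchine–Kahane-type inequality.)  For vectors `x_1,…,x_n` in a
real inner product space, `p ≥ 1`, and i.i.d. Rademacher variables `σ_1,…,σ_n`: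
`E_σ ‖Σ_i σ_i x_i‖^p ≤ (p Σ_i ‖x_i‖²)^{p/2}`. -/
theorem rademacher_moment_bound {H : Type*} [NormedAddCommGroup H]
    [InnerProductSpace ℝ H] (n : ℕ) (x : Fin n → H) (p : ℝ) (hp : 1 ≤ p) :
    Erad n (fun σ => ‖∑ i, sgn (σ i) • x i‖ ^ p) ≤
      (p * ∑ i, ‖x i‖ ^ 2) ^ (p / 2) := by
  obtain ⟨m, hmp, hpm⟩ := exists_nat_le_and_le_two_mul hp
  have hm : (0 : ℝ) < m := by linarith
  have hpS : 0 ≤ p * ∑ i, ‖x i‖ ^ 2 := by positivity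
  calc Erad n (fun σ => ‖signedSum x σ‖ ^ p)
      ≤ Erad n (fun σ => ‖signedSum x σ‖ ^ ((2 * m : ℕ) : ℝ)) ^ (p / (2 * m : ℕ)) :=
        Erad_rpow_le_rpow_Erad (fun σ => norm_nonneg _) (by linarith) (by push_cast; exact hpm)
    _ ≤ ((m * ∑ i, ‖x i‖ ^ 2) ^ m) ^ (p / (2 * m : ℕ)) := by
        simp only [Real.rpow_natCast]
        gcongr
        · exact Erad_nonneg fun σ => by positivity
        · exact Erad_norm_signedSum_pow_le x m
    _ ≤ ((p * ∑ i, ‖x i‖ ^ 2) ^ m) ^ (p / (2 * m : ℕ)) := by gcongr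
    _ = (p * ∑ i, ‖x i‖ ^ 2) ^ (p / 2) := by
        rw [← Real.rpow_natCast, ← Real.rpow_mul hpS]
        congr 1
        field_simp
        push_cast
        ring

end
end
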